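/- For the symmetric case p = 1/2, the generating function identity ∑_{k≥0} Ã_k(z) u^k = ∏_{j≥1} (1 + (u−1)(1 − e^{-z/2^j})) holds, where Ã_k(z) := e^{-z} ∑_{n≥0} P(X_n = k) z^n / n! and X_n is the binomial splitting process with p = 1/2. -/

import Mathlib

/-!
Let `S(w) = ∑ₖ (∑ₙ a n k wⁿ/n!) uᵏ`. Multiplying an exponential generating function by `eʷ`
replaces its coefficients by their binomial transform, so the recurrence for `a` turns into
`S(2w) = (1 + u(eʷ − 1)) S(w)`. Hence `F(w) = e^{-w} S(w)`, the left-hand side, satisfies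
`F(2w) = φ(w) F(w)` with `φ(w) = 1 + (u − 1)(1 − e^{-w})`. Iterating,
`F(z) = (∏_{j<m} φ(z/2^{j+1})) · F(z/2^m)`, and `F(z/2^m) → F(0) = 1` as `m → ∞`.
-/

open Complex Filter Topology Finset
open scoped Nat

noncomputable def egf (c : ℕ → ℂ) (z : ℂ) : ℂ :=
  ∑' n, c n * z ^ n / n !

lemma Complex.hasSum_pow_div_factorial (z : ℂ) : HasSum (fun n => z ^ n / n !) (exp z) := by
  rw [Complex.exp_eq_exp_ℂ]
  exact NormedSpace.expSeries_div_hasSum_exp z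

lemma Real.hasSum_pow_div_factorial (x : ℝ) : HasSum (fun n => x ^ n / n !) (Real.exp x) := by
  rw [Real.exp_eq_exp_ℝ]
  exact NormedSpace.expSeries_div_hasSum_exp x

section egf

variable {c : ℕ → ℂ}

lemma norm_egf_term_le (hc : ∀ n, ‖c n‖ ≤ 1) (z : ℂ) (n : ℕ) :
    ‖c n * z ^ n / (n ! : ℂ)‖ ≤ ‖z‖ ^ n / n ! := by
  rw [norm_div, norm_mul, norm_pow, Complex.norm_natCast]
  gcongr
  exact mul_le_of_le_one_left (by positivity) (hc n)

lemma summable_norm_egf_term (hc : ∀ n, ‖c n‖ ≤ 1) (z : ℂ) :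
    Summable fun n => ‖c n * z ^ n / (n ! : ℂ)‖ :=
  (Real.summable_pow_div_factorial ‖z‖).of_nonneg_of_le (fun _ => norm_nonneg _)
    (norm_egf_term_le hc z)

lemma egf_term_mul_exp_term {n j : ℕ} (hj : j ≤ n) (z : ℂ) :
    c j * z ^ j / j ! * (z ^ (n - j) / (n - j)!) = n.choose j * c j * z ^ n / n ! := by
  have hfac : (n ! : ℂ) = n.choose j * j ! * (n - j)! := by
    exact_mod_cast (Nat.choose_mul_factorial_mul_factorial hj).symm
  have hpow : z ^ n = z ^ j * z ^ (n - j) := by rw [← pow_add, Nat.add_sub_cancel' hj]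
  have hchoose : (n.choose j : ℂ) ≠ 0 := by exact_mod_cast (Nat.choose_pos hj).ne'
  rw [hfac, hpow]
  field_simp

lemma hasSum_egf_mul_exp {z : ℂ} (hc : Summable fun n => ‖c n * z ^ n / (n ! : ℂ)‖) :
    HasSum (fun n => (∑ j ∈ range (n + 1), (n.choose j : ℂ) * c j) * z ^ n / n !)
      (egf c z * exp z) := by
  have hexp : Summable fun n => ‖z ^ n / (n ! : ℂ)‖ := NormedSpace.norm_expSeries_div_summable z
  have hterm : ∀ n, ∑ j ∈ range (n + 1), c j * z ^ j / j ! * (z ^ (n - j) / (n - j)!)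
      = (∑ j ∈ range (n + 1), (n.choose j : ℂ) * c j) * z ^ n / n ! := by
    intro n
    rw [sum_mul, sum_div]
    exact sum_congr rfl fun j hj => egf_term_mul_exp_term (Nat.lt_succ_iff.mp (mem_range.mp hj)) z
  rw [egf, ← (Complex.hasSum_pow_div_factorial z).tsum_eq,
    tsum_mul_tsum_eq_tsum_sum_range_of_summable_norm hc hexp]
  simp only [hterm]
  refine Summable.hasSum ?_
  simpa only [hterm] using (summable_norm_sum_mul_range_of_summable_norm hc hexp).of_norm

lemma norm_egf_le (hc : ∀ n, ‖c n‖ ≤ 1) {k : ℕ} (hck : ∀ n < k, c n = 0) (z : ℂ) :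
    ‖egf c z‖ ≤ ‖z‖ ^ k / k ! * Real.exp ‖z‖ := by
  have hs := summable_norm_egf_term hc z
  refine (norm_tsum_le_tsum_norm hs).trans ?_
  rw [← hs.sum_add_tsum_nat_add k, sum_eq_zero fun n hn => by simp [hck n (mem_range.mp hn)],
    zero_add, ← (Real.hasSum_pow_div_factorial ‖z‖).tsum_eq, ← tsum_mul_left]
  refine (hs.comp_injective (add_left_injective k)).tsum_le_tsum (fun m => ?_)
    ((Real.summable_pow_div_factorial ‖z‖).mul_left _)
  refine (norm_egf_term_le hc z (m + k)).trans ?_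
  have hfac : (k ! * m ! : ℝ) ≤ (m + k)! := by
    rw [add_comm]
    exact_mod_cast
      Nat.le_of_dvd (Nat.factorial_pos _) (Nat.factorial_mul_factorial_dvd_factorial_add k m)
  rw [pow_add, div_mul_div_comm, mul_comm (‖z‖ ^ m)]
  gcongr

end egf

lemma sum_range_choose_eq_two_pow_sub_one (n : ℕ) :
    ∑ j ∈ range n, (n.choose j : ℝ) = 2 ^ n - 1 := by
  have h := Nat.sum_range_choose n
  rw [sum_range_succ, Nat.choose_self] at h
  rw [eq_sub_iff_add_eq]
  exact_mod_cast h

noncomputable def genFun (a : ℕ → ℕ → ℝ) (u w : ℂ) : ℂ :=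
  ∑' k, egf (fun n => (a n k : ℂ)) w * u ^ k

/-- `a n k = P(X_n = k)` for the splitting process `X_0 = 0`, `X_n = X_{I_n} + 1`. -/
structure IsSplittingLaw (a : ℕ → ℕ → ℝ) : Prop where
  zero_zero : a 0 0 = 1
  zero_succ : ∀ k, a 0 (k + 1) = 0
  pos_zero : ∀ n, 1 ≤ n → a n 0 = 0
  succ : ∀ n, 1 ≤ n → ∀ k, a n (k + 1) =
    ∑ j ∈ range n, (n.choose j : ℝ) / (2 ^ n - 1) * a j k

namespace IsSplittingLaw

variable {a : ℕ → ℕ → ℝ}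

lemma abs_le_one (ha : IsSplittingLaw a) (n k : ℕ) : |a n k| ≤ 1 := by
  induction n using Nat.strong_induction_on generalizing k with
  | _ n ih =>
  rcases Nat.eq_zero_or_pos n with rfl | hn
  · cases k <;> simp [ha.zero_zero, ha.zero_succ]
  cases k with
  | zero => simp [ha.pos_zero n hn]
  | succ k =>
    have hden : (0 : ℝ) < 2 ^ n - 1 := by
      rw [sub_pos]; exact one_lt_pow₀ one_lt_two hn.ne'
    rw [ha.succ n hn k]
    calc |∑ j ∈ range n, (n.choose j : ℝ) / (2 ^ n - 1) * a j k|
        ≤ ∑ j ∈ range n, (n.choose j : ℝ) / (2 ^ n - 1) := by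
          refine (abs_sum_le_sum_abs _ _).trans (sum_le_sum fun j hj => ?_)
          rw [abs_mul, abs_of_nonneg (by positivity)]
          exact mul_le_of_le_one_right (by positivity) (ih j (mem_range.mp hj) k)
      _ = 1 := by rw [← sum_div, sum_range_choose_eq_two_pow_sub_one, div_self hden.ne']

lemma eq_zero_of_lt (ha : IsSplittingLaw a) {n k : ℕ} (hnk : n < k) : a n k = 0 := by
  induction k generalizing n with
  | zero => omega
  | succ k ih =>
    rcases Nat.eq_zero_or_pos n with rfl | hn
    · exact ha.zero_succ k
    rw [ha.succ n hn k]
    exact sum_eq_zero fun j hj => by rw [ih (by have := mem_range.mp hj; omega), mul_zero]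

lemma sum_choose_mul (ha : IsSplittingLaw a) (n k : ℕ) :
    ∑ j ∈ range (n + 1), (n.choose j : ℝ) * a j k = (2 ^ n - 1) * a n (k + 1) + a n k := by
  rw [sum_range_succ, Nat.choose_self, Nat.cast_one, one_mul]
  rcases Nat.eq_zero_or_pos n with rfl | hn
  · simp
  have hden : (2 : ℝ) ^ n - 1 ≠ 0 := by
    rw [sub_ne_zero]; exact (one_lt_pow₀ one_lt_two hn.ne').ne'
  rw [ha.succ n hn k, mul_sum]
  congr 1
  exact sum_congr rfl fun j _ => by field_simp

lemma norm_le_one (ha : IsSplittingLaw a) (k n : ℕ) : ‖(a n k : ℂ)‖ ≤ 1 := by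
  rw [Complex.norm_real, Real.norm_eq_abs]
  exact ha.abs_le_one n k

lemma egf_zero (ha : IsSplittingLaw a) (z : ℂ) : egf (fun n => (a n 0 : ℂ)) z = 1 := by
  rw [egf, tsum_eq_single 0 fun n hn => by simp [ha.pos_zero n (Nat.one_le_iff_ne_zero.2 hn)]]
  simp [ha.zero_zero]

lemma norm_egf_le (ha : IsSplittingLaw a) (k : ℕ) (z : ℂ) :
    ‖egf (fun n => (a n k : ℂ)) z‖ ≤ ‖z‖ ^ k / k ! * Real.exp ‖z‖ :=
  _root_.norm_egf_le (ha.norm_le_one k) (fun _ hn => by simp [ha.eq_zero_of_lt hn]) z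

lemma egf_succ_two_mul (ha : IsSplittingLaw a) (k : ℕ) (w : ℂ) :
    egf (fun n => (a n (k + 1) : ℂ)) (2 * w)
      = (exp w - 1) * egf (fun n => (a n k : ℂ)) w + egf (fun n => (a n (k + 1) : ℂ)) w := by
  have hk := summable_norm_egf_term (ha.norm_le_one k) w
  have hk0 : HasSum (fun n => (a n k : ℂ) * w ^ n / n !) (egf (fun n => (a n k : ℂ)) w) :=
    hk.of_norm.hasSum
  have hk1 : HasSum (fun n => (a n (k + 1) : ℂ) * w ^ n / n !)
      (egf (fun n => (a n (k + 1) : ℂ)) w) :=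
    (summable_norm_egf_term (ha.norm_le_one (k + 1)) w).of_norm.hasSum
  have hbinom := hasSum_egf_mul_exp hk
  have hcoeff : ∀ n, ∑ j ∈ range (n + 1), (n.choose j : ℂ) * (a j k : ℂ)
      = (2 ^ n - 1) * a n (k + 1) + a n k := by
    intro n
    exact_mod_cast ha.sum_choose_mul n k
  simp only [hcoeff] at hbinom
  refine (((hbinom.sub hk0).add hk1).congr_fun fun n => ?_).tsum_eq.trans (by ring)
  rw [mul_pow]
  ring

lemma norm_genFun_term_le (ha : IsSplittingLaw a) (u w : ℂ) (k : ℕ) :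
    ‖egf (fun n => (a n k : ℂ)) w * u ^ k‖ ≤ Real.exp ‖w‖ * ((‖w‖ * ‖u‖) ^ k / k !) := by
  rw [norm_mul, norm_pow, mul_pow]
  calc ‖egf (fun n => (a n k : ℂ)) w‖ * ‖u‖ ^ k
      ≤ ‖w‖ ^ k / k ! * Real.exp ‖w‖ * ‖u‖ ^ k := by
        gcongr; exact ha.norm_egf_le k w
    _ = Real.exp ‖w‖ * (‖w‖ ^ k * ‖u‖ ^ k / k !) := by ring

lemma summable_genFun_term (ha : IsSplittingLaw a) (u w : ℂ) :
    Summable fun k => egf (fun n => (a n k : ℂ)) w * u ^ k :=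
  Summable.of_norm_bounded ((Real.summable_pow_div_factorial _).mul_left _)
    (ha.norm_genFun_term_le u w)

lemma genFun_two_mul (ha : IsSplittingLaw a) (u w : ℂ) :
    genFun a u (2 * w) = (1 + u * (exp w - 1)) * genFun a u w := by
  set t : ℕ → ℂ := fun k => egf (fun n => (a n k : ℂ)) w * u ^ k
  have ht : HasSum t (genFun a u w) := (ha.summable_genFun_term u w).hasSum
  have htail : HasSum (fun k => t (k + 1)) (genFun a u w - 1) := by
    have h := (hasSum_nat_add_iff' 1).mpr ht
    rwa [sum_range_one, show t 0 = 1 by simp [t, ha.egf_zero]] at h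
  have hstep : ∀ k, egf (fun n => (a n (k + 1) : ℂ)) (2 * w) * u ^ (k + 1)
      = (exp w - 1) * u * t k + t (k + 1) := by
    intro k
    simp only [t, ha.egf_succ_two_mul, pow_succ]
    ring
  rw [genFun, (ha.summable_genFun_term u (2 * w)).tsum_eq_zero_add, ha.egf_zero, pow_zero,
    mul_one, funext hstep, ((ht.mul_left ((exp w - 1) * u)).add htail).tsum_eq]
  ring

lemma tendsto_genFun_zero (ha : IsSplittingLaw a) (u : ℂ) :
    Tendsto (genFun a u) (𝓝 0) (𝓝 1) := by
  have hlim : ∀ k, Tendsto (fun w => egf (fun n => (a n k : ℂ)) w * u ^ k) (𝓝 0)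
      (𝓝 (if k = 0 then 1 else 0)) := by
    rintro (_ | k)
    · simp [ha.egf_zero]
    · have hbound : Continuous fun w : ℂ =>
          Real.exp ‖w‖ * ((‖w‖ * ‖u‖) ^ (k + 1) / (k + 1)!) := by
        fun_prop
      simpa using squeeze_zero_norm (ha.norm_genFun_term_le u · (k + 1))
        (by simpa using hbound.tendsto 0)
  have hdom : ∀ᶠ w in 𝓝 (0 : ℂ), ∀ k,
      ‖egf (fun n => (a n k : ℂ)) w * u ^ k‖ ≤ Real.exp 1 * (‖u‖ ^ k / k !) := by
    filter_upwards [Metric.closedBall_mem_nhds (0 : ℂ) one_pos] with w hw k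
    rw [mem_closedBall_zero_iff] at hw
    refine (ha.norm_genFun_term_le u w k).trans ?_
    have hwu : ‖w‖ * ‖u‖ ≤ ‖u‖ := mul_le_of_le_one_left (norm_nonneg _) hw
    gcongr
  have h := tendsto_tsum_of_dominated_convergence
    ((Real.summable_pow_div_factorial ‖u‖).mul_left _) hlim hdom
  rwa [tsum_ite_eq] at h

end IsSplittingLaw

lemma tendsto_div_two_pow (z : ℂ) : Tendsto (fun m : ℕ => z / 2 ^ m) atTop (𝓝 0) := by
  simpa [div_eq_mul_inv] using
    (tendsto_pow_atTop_nhds_zero_of_norm_lt_one (x := (2 : ℂ)⁻¹) (by norm_num)).const_mul z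

lemma eq_tprod_of_map_two_mul {M : Type*} [CommMonoid M] [TopologicalSpace M] [ContinuousMul M]
    [T2Space M] {F f : ℂ → M} (hF : ∀ w, F (2 * w) = f w * F w) (hF0 : Tendsto F (𝓝 0) (𝓝 1))
    {z : ℂ} (hf : Multipliable fun j : ℕ => f (z / 2 ^ (j + 1))) :
    F z = ∏' j : ℕ, f (z / 2 ^ (j + 1)) := by
  have hiter : ∀ m, F z = (∏ j ∈ range m, f (z / 2 ^ (j + 1))) * F (z / 2 ^ m) := by
    intro m
    induction m with
    | zero => simp
    | succ m ih =>
      have hhalf : z / 2 ^ m = 2 * (z / 2 ^ (m + 1)) := by rw [pow_succ]; field_simp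
      rw [ih, hhalf, hF, prod_range_succ, mul_assoc]
  have hlim := hf.hasProd.tendsto_prod_nat.mul (hF0.comp (tendsto_div_two_pow z))
  rw [mul_one] at hlim
  exact tendsto_nhds_unique (tendsto_const_nhds.congr hiter) hlim

lemma multipliable_one_add_mul_one_sub_exp (u z : ℂ) :
    Multipliable fun j : ℕ => 1 + (u - 1) * (1 - exp (-(z / 2 ^ (j + 1)))) := by
  refine multipliable_one_add_of_summable ?_
  have hgeom : Summable fun j : ℕ => ‖u - 1‖ * (2 * ‖z‖ * (1 / 2) ^ (j + 1)) :=
    ((summable_geometric_two.mul_left (1 / 2)).congr fun j => by ring).mul_left _ |>.mul_left _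
  refine Summable.of_norm_bounded_eventually_nat hgeom ?_
  have hsmall := ((tendsto_div_two_pow z).comp (tendsto_add_atTop_nat 1)).norm
  rw [norm_zero] at hsmall
  filter_upwards [hsmall.eventually_le_const one_pos] with j hj
  rw [norm_norm, norm_mul, norm_sub_rev 1]
  gcongr
  refine (Complex.norm_exp_sub_one_le (x := -(z / 2 ^ (j + 1))) (by simpa using hj)).trans_eq ?_
  simp [div_eq_mul_inv, mul_assoc]

/-- In the symmetric case `p = 1/2`, the generating function identity
`∑_{k≥0} Ã_k(z) u^k = ∏_{j≥1} (1 + (u−1)(1 − e^{-z/2^j}))` holds for `Re(z) > 0`,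
where `Ã_k(z) := e^{-z} ∑_{n≥0} P(X_n = k) z^n/n!` and `a n k = P(X_n = k)` with
`P(I_n = j) = C(n,j)/(2^n − 1)`. -/
theorem stmt_12 (a : ℕ → ℕ → ℝ) (ha00 : a 0 0 = 1) (ha0 : ∀ k, a 0 (k + 1) = 0)
    (han0 : ∀ n, 1 ≤ n → a n 0 = 0)
    (harec : ∀ n, 1 ≤ n → ∀ k, a n (k + 1) =
      ∑ j ∈ Finset.range n, (n.choose j : ℝ) / (2 ^ n - 1) * a j k)
    (A : ℕ → ℂ → ℂ)
    (hA : ∀ k z, A k z = Complex.exp (-z) *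
      ∑' n : ℕ, (a n k : ℂ) * z ^ n / (n.factorial : ℂ)) :
    ∀ z u : ℂ, 0 < z.re →
      ∑' k : ℕ, A k z * u ^ k
        = ∏' j : ℕ, (1 + (u - 1) * (1 - Complex.exp (-(z / 2 ^ (j + 1))))) := by
  intro z u _
  have ha : IsSplittingLaw a := ⟨ha00, ha0, han0, harec⟩
  let F : ℂ → ℂ := fun w => exp (-w) * genFun a u w
  have hAF : ∑' k, A k z * u ^ k = F z := by
    simp only [hA, mul_assoc, tsum_mul_left]
    rfl
  have hF : ∀ w, F (2 * w) = (1 + (u - 1) * (1 - exp (-w))) * F w := by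
    intro w
    simp only [F, ha.genFun_two_mul]
    rw [two_mul, neg_add, exp_add, exp_neg]
    field_simp
    ring
  have hF0 : Tendsto F (𝓝 0) (𝓝 1) := by
    simpa using ((continuous_exp.comp continuous_neg).tendsto 0).mul (ha.tendsto_genFun_zero u)
  rw [hAF]
  exact eq_tprod_of_map_two_mul hF hF0 (multipliable_one_add_mul_one_sub_exp u z)
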